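/- arXiv:2011.14736 — 6 statements merged into one kernel-verified Lean document; each statement's English description precedes it below -/
import Mathlib

section
/- Let s and R be real numbers with 0 < s < 1 < R, and set c(s,R) = (1 − s²)/(R − s²/R). Then for all complex numbers z, w with |z| ≤ s and |w| ≤ s, one has dist_𝔻(z/R, w/R) ≥ c(s,R) · dist_𝔻(z, w). -/
/-!
Compare the two distances along the dilations `x ↦ (z / x, w / x)`, `1 ≤ x ≤ R`. Writing
`dist_𝔻(z/x, w/x) = 2 artanh (|z - w| / √Q(x))` with
`Q(x) = |x - w̄z/x|² = |z - w|² + (x² - |z|²)(x² - |w|²)/x²`, the product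
`dist_𝔻(z/x, w/x) · (x - s²/x)` has nonnegative derivative on `[1, ∞)`: bounding
`2 artanh u ≥ 2u` reduces this to a polynomial inequality in `x², |z|², |w|², s²`.
Comparing the values at `x = 1` and `x = R` gives the theorem.
-/

open Complex

/-- `2 * artanh x = log ((1+x)/(1-x))`. -/
noncomputable def twoArtanh (x : ℝ) : ℝ := Real.log ((1 + x) / (1 - x))

/-- The hyperbolic distance in the unit disc:
`dist_𝔻(z,w) = 2 * artanh (|z - w| / |1 - conj w * z|)`. -/
noncomputable def hypDistDisc (z w : ℂ) : ℝ :=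
  twoArtanh (‖z - w‖ / ‖1 - (starRingEnd ℂ) w * z‖)

open Set

theorem twoArtanh_eq_log_sub_log {u : ℝ} (h : |u| < 1) :
    twoArtanh u = Real.log (1 + u) - Real.log (1 - u) := by
  obtain ⟨h₁, h₂⟩ := abs_lt.mp h
  exact Real.log_div (by linarith) (by linarith)

theorem two_mul_le_twoArtanh {u : ℝ} (h₀ : 0 ≤ u) (h₁ : u < 1) : 2 * u ≤ twoArtanh u := by
  have hu : |u| < 1 := by rwa [abs_of_nonneg h₀]
  rw [twoArtanh_eq_log_sub_log hu]
  simpa using le_hasSum (Real.hasSum_log_sub_log_of_abs_lt_one hu) 0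
    fun k _ => by positivity

theorem hasDerivAt_twoArtanh {u : ℝ} (h : |u| < 1) :
    HasDerivAt twoArtanh (2 / (1 - u ^ 2)) u := by
  obtain ⟨h₁, h₂⟩ := abs_lt.mp h
  have hquot := ((hasDerivAt_id u).const_add 1).div ((hasDerivAt_id u).const_sub 1)
    (sub_ne_zero.mpr h₂.ne')
  have hpos : 0 < (1 + u) / (1 - u) := div_pos (by linarith) (by linarith)
  refine (hquot.log hpos.ne').congr_deriv ?_
  have : 1 - u ≠ 0 := by linarith
  have : 1 + u ≠ 0 := by linarith
  have : 1 - u ^ 2 ≠ 0 := by nlinarith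
  simp only [Pi.div_apply, id]
  field_simp
  ring

theorem HasDerivAt.twoArtanh_div_sqrt {Q : ℝ → ℝ} {Q' e x : ℝ} (hQ : HasDerivAt Q Q' x)
    (he : e ^ 2 < Q x) :
    HasDerivAt (fun y => twoArtanh (e / √(Q y))) (-(e / √(Q x)) * Q' / (Q x - e ^ 2)) x := by
  have hQ₀ : 0 < Q x := (sq_nonneg e).trans_lt he
  have ht : 0 < √(Q x) := Real.sqrt_pos.mpr hQ₀
  have hu : |e / √(Q x)| < 1 := by
    rw [abs_div, abs_of_pos ht, div_lt_one ht]
    exact Real.lt_sqrt_of_sq_lt (by rwa [sq_abs])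
  refine ((hasDerivAt_twoArtanh hu).comp x
    (((hQ.sqrt hQ₀.ne').inv ht.ne').const_mul e)).congr_deriv ?_
  have hsq : √(Q x) ^ 2 = Q x := Real.sq_sqrt hQ₀.le
  have : Q x - e ^ 2 ≠ 0 := (sub_pos.mpr he).ne'
  field_simp
  rw [hsq]
  field_simp

theorem monotoneOn_twoArtanh_div_sqrt_mul {D : Set ℝ} (hD : Convex ℝ D) {Q Q' g g' : ℝ → ℝ}
    {e : ℝ} (he : 0 ≤ e) (hQ : ∀ x ∈ D, HasDerivAt Q (Q' x) x)
    (hg : ∀ x ∈ D, HasDerivAt g (g' x) x) (heQ : ∀ x ∈ D, e ^ 2 < Q x)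
    (hg' : ∀ x ∈ D, 0 ≤ g' x) (hQg : ∀ x ∈ D, Q' x * g x ≤ 2 * g' x * (Q x - e ^ 2)) :
    MonotoneOn (fun x => twoArtanh (e / √(Q x)) * g x) D := by
  have hderiv : ∀ x ∈ D, HasDerivAt (fun x => twoArtanh (e / √(Q x)) * g x)
      (-(e / √(Q x)) * Q' x / (Q x - e ^ 2) * g x + twoArtanh (e / √(Q x)) * g' x) x :=
    fun x hx => ((hQ x hx).twoArtanh_div_sqrt (heQ x hx)).mul (hg x hx)
  refine monotoneOn_of_hasDerivWithinAt_nonneg hD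
    (fun x hx => (hderiv x hx).continuousAt.continuousWithinAt)
    (fun x hx => (hderiv x (interior_subset hx)).hasDerivWithinAt) fun x hx => ?_
  replace hx := interior_subset hx
  set u := e / √(Q x)
  have hgap : 0 < Q x - e ^ 2 := sub_pos.mpr (heQ x hx)
  have hu₀ : 0 ≤ u := by positivity
  have hu₁ : u < 1 := by
    have ht : 0 < √(Q x) := Real.sqrt_pos.mpr ((sq_nonneg e).trans_lt (heQ x hx))
    exact (div_lt_one ht).mpr (Real.lt_sqrt_of_sq_lt (heQ x hx))
  have hratio : Q' x * g x / (Q x - e ^ 2) ≤ 2 * g' x := (div_le_iff₀ hgap).mpr (hQg x hx)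
  calc 0 = -u * (2 * g' x) + 2 * u * g' x := by ring
    _ ≤ -u * (Q' x * g x / (Q x - e ^ 2)) + twoArtanh u * g' x := by
        gcongr ?_ + ?_
        · exact mul_le_mul_of_nonpos_left hratio (neg_nonpos.mpr hu₀)
        · exact mul_le_mul_of_nonneg_right (two_mul_le_twoArtanh hu₀ hu₁) (hg' x hx)
    _ = -u * Q' x / (Q x - e ^ 2) * g x + twoArtanh u * g' x := by ring

theorem norm_ofReal_sub_conj_mul_div_sq (z w : ℂ) {x : ℝ} (hx : x ≠ 0) :
    ‖(x : ℂ) - starRingEnd ℂ w * z / x‖ ^ 2 =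
      ‖z - w‖ ^ 2 + (x ^ 2 - ‖z‖ ^ 2) * (x ^ 2 - ‖w‖ ^ 2) / x ^ 2 := by
  simp only [Complex.sq_norm, Complex.normSq_apply, Complex.sub_re, Complex.sub_im,
    Complex.div_ofReal_re, Complex.div_ofReal_im, Complex.mul_re, Complex.mul_im,
    Complex.conj_re, Complex.conj_im, Complex.ofReal_re, Complex.ofReal_im]
  field_simp
  ring

theorem hypDistDisc_div_ofReal (z w : ℂ) {x : ℝ} (hx : x ≠ 0) :
    hypDistDisc (z / x) (w / x) = twoArtanh (‖z - w‖ / ‖(x : ℂ) - starRingEnd ℂ w * z / x‖) := by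
  have hx' : (x : ℂ) ≠ 0 := Complex.ofReal_ne_zero.mpr hx
  have hden : 1 - starRingEnd ℂ (w / x) * (z / x) = ((x : ℂ) - starRingEnd ℂ w * z / x) / x := by
    rw [map_div₀, Complex.conj_ofReal]
    field_simp
  rw [hypDistDisc, hden, ← sub_div, norm_div, norm_div, div_div_div_cancel_right₀ (by simpa)]

theorem pow_four_sub_mul_sq_sub_le {p r s x : ℝ} (hp : 0 ≤ p) (hps : p ≤ s) (hr : 0 ≤ r)
    (hrs : r ≤ s) (hs : s ≤ 1) (hx : 1 ≤ x) :
    (x ^ 4 - (p * r) ^ 2) * (x ^ 2 - s ^ 2) ≤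
      (x ^ 2 + s ^ 2) * ((x ^ 2 - p ^ 2) * (x ^ 2 - r ^ 2)) := by
  have hp2 : p ^ 2 ≤ s ^ 2 := pow_le_pow_left₀ hp hps 2
  have hr2 : r ^ 2 ≤ s ^ 2 := pow_le_pow_left₀ hr hrs 2
  have hs2 : s ^ 2 ≤ 1 := pow_le_one₀ (hp.trans hps) hs
  have hx2 : 1 ≤ x ^ 2 := one_le_pow₀ hx
  have hdiff : (x ^ 2 + s ^ 2) * ((x ^ 2 - p ^ 2) * (x ^ 2 - r ^ 2))
      - (x ^ 4 - (p * r) ^ 2) * (x ^ 2 - s ^ 2) =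
      x ^ 2 * ((2 * s ^ 2 - p ^ 2 - r ^ 2) * (x ^ 2 - 1)
        + (s ^ 2 - p ^ 2) * (1 - r ^ 2) + (s ^ 2 - r ^ 2) * (1 - p ^ 2)) := by ring
  rw [← sub_nonneg, hdiff]
  refine mul_nonneg (sq_nonneg x) (add_nonneg (add_nonneg ?_ ?_) ?_) <;>
    exact mul_nonneg (by linarith) (by linarith)

theorem monotoneOn_hypDistDisc_div_mul {s : ℝ} (hs : s < 1) {z w : ℂ} (hz : ‖z‖ ≤ s)
    (hw : ‖w‖ ≤ s) :
    MonotoneOn (fun x : ℝ => hypDistDisc (z / x) (w / x) * (x - s ^ 2 / x)) (Ici 1) := by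
  set p := ‖z‖
  set r := ‖w‖
  have hx₀ : ∀ x ∈ Ici (1 : ℝ), x ≠ 0 := fun x hx => (zero_lt_one.trans_le hx).ne'
  refine (monotoneOn_twoArtanh_div_sqrt_mul (convex_Ici 1) (norm_nonneg (z - w))
    (Q := fun x => ‖z - w‖ ^ 2 + (x ^ 2 - p ^ 2) * (x ^ 2 - r ^ 2) / x ^ 2)
    (Q' := fun x => 2 * x - 2 * (p * r) ^ 2 / x ^ 3) (g := fun x => x - s ^ 2 / x)
    (g' := fun x => 1 + s ^ 2 / x ^ 2) ?_ ?_ ?_ ?_ ?_).congr ?_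
  · intro x hx
    have hsq := hasDerivAt_pow 2 x
    refine ((((hsq.sub_const (p ^ 2)).mul (hsq.sub_const (r ^ 2))).div hsq
      (pow_ne_zero 2 (hx₀ x hx))).const_add (‖z - w‖ ^ 2)).congr_deriv ?_
    simp only [Pi.mul_apply]
    field_simp [hx₀ x hx]
    ring
  · intro x hx
    refine ((hasDerivAt_id' x).sub ((hasDerivAt_const x (s ^ 2)).div (hasDerivAt_id' x)
      (hx₀ x hx))).congr_deriv ?_
    field_simp [hx₀ x hx]
    ring
  · intro x (hx : 1 ≤ x)
    have hp : p ^ 2 < x ^ 2 := pow_lt_pow_left₀ (by linarith) (norm_nonneg z) two_ne_zero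
    have hr : r ^ 2 < x ^ 2 := pow_lt_pow_left₀ (by linarith) (norm_nonneg w) two_ne_zero
    have : 0 < (x ^ 2 - p ^ 2) * (x ^ 2 - r ^ 2) / x ^ 2 := by
      apply div_pos (mul_pos (sub_pos.mpr hp) (sub_pos.mpr hr))
      positivity
    linarith
  · intro x hx
    positivity
  · intro x hx
    have hx' := hx₀ x hx
    simp only [add_sub_cancel_left]
    calc _ = 2 * ((x ^ 4 - (p * r) ^ 2) * (x ^ 2 - s ^ 2)) / x ^ 4 := by field_simp
      _ ≤ 2 * ((x ^ 2 + s ^ 2) * ((x ^ 2 - p ^ 2) * (x ^ 2 - r ^ 2))) / x ^ 4 := by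
        gcongr 2 * ?_ / _
        exact pow_four_sub_mul_sq_sub_le (norm_nonneg z) hz (norm_nonneg w) hw hs.le hx
      _ = _ := by field_simp
  · intro x hx
    dsimp only
    rw [hypDistDisc_div_ofReal z w (hx₀ x hx), ← norm_ofReal_sub_conj_mul_div_sq z w (hx₀ x hx),
      Real.sqrt_sq (norm_nonneg _)]

theorem hypDist_scale_down_lower_bound_general
    (s R : ℝ) (hs1 : s < 1) (hR : 1 < R)
    (z w : ℂ) (hz : ‖z‖ ≤ s) (hw : ‖w‖ ≤ s) :
    hypDistDisc (z / R) (w / R) ≥ ((1 - s ^ 2) / (R - s ^ 2 / R)) * hypDistDisc z w := by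
  have hmono := monotoneOn_hypDistDisc_div_mul hs1 hz hw self_mem_Ici (mem_Ici.mpr hR.le) hR.le
  simp only [Complex.ofReal_one, div_one] at hmono
  have hscale : 0 < R - s ^ 2 / R := by
    rw [sub_pos, div_lt_iff₀ (by linarith)]
    nlinarith [(norm_nonneg z).trans hz]
  rw [ge_iff_le, div_mul_eq_mul_div, div_le_iff₀ hscale]
  linarith

/-- Hyperbolic distances shrink by at most the factor `c(s,R) = (1-s²)/(R - s²/R)`
when points of modulus at most `s < 1` are scaled down by `R > 1`. -/
theorem hypDist_scale_down_lower_bound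
    (s R : ℝ) (hs0 : 0 < s) (hs1 : s < 1) (hR : 1 < R)
    (z w : ℂ) (hz : ‖z‖ ≤ s) (hw : ‖w‖ ≤ s) :
    hypDistDisc (z / R) (w / R) ≥ ((1 - s ^ 2) / (R - s ^ 2 / R)) * hypDistDisc z w :=
  hypDist_scale_down_lower_bound_general s R hs1 hR z w hz hw
end

section
/- Let b : (−3, ∞) → ℝ be defined by b(x) = ((x + 1/3)/(1 + x/3))². Then for every r with 0 < r < 1: (i) 0 < r < b(r) < 1; and (ii) for every x with 0 < x < b(r) and x ≠ r, one has |b(x) − b(r)|/|x − r| < (b(b(r)) − b(r))/(b(r) − r). -/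
/-- Cross-ratio/Schwarzian estimate for the Blaschke product `b(x) = ((x+1/3)/(1+x/3))²`:
for `0 < r < 1` we have `r < b(r) < 1`, and the difference quotient of `b` at `r`
over `(0, b(r))` is bounded by `(b²(r) - b(r))/(b(r) - r)`. -/
theorem blaschke_third_scaling
    (b : ℝ → ℝ) (hb : ∀ x : ℝ, b x = ((x + 1/3) / (1 + x/3)) ^ 2)
    (r : ℝ) (hr0 : 0 < r) (hr1 : r < 1) :
    (r < b r ∧ b r < 1) ∧
    ∀ x : ℝ, 0 < x → x < b r → x ≠ r →
      |b x - b r| / |x - r| < (b (b r) - b r) / (b r - r) := by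
  have hb' : ∀ x : ℝ, b x = ((3*x+1)/(x+3)) ^ 2 := by
    intro x
    rw [hb]
    congr 1
    rcases eq_or_ne (x + 3) 0 with h | h
    · rw [show (1 : ℝ) + x/3 = (x+3)/3 by ring, h]
      simp
    · have h' : 1 + x/3 ≠ 0 := fun hc => h (by linarith)
      rw [div_eq_div_iff h' h]
      ring
  have hr3 : (0:ℝ) < r + 3 := by linarith
  have hr3' : r + 3 ≠ 0 := ne_of_gt hr3
  -- value of s := b r
  set s := b r with hs
  have hs_eq : s * (r+3)^2 = (3*r+1)^2 := by
    rw [hs, hb' r]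
    field_simp
  have hr3sq : (0:ℝ) < (r+3)^2 := by positivity
  have hrs : r < s := by nlinarith [pow_pos (show (0:ℝ) < 1 - r by linarith) 3]
  have hs1 : s < 1 := by nlinarith
  have hs0 : 0 < s := lt_trans hr0 hrs
  have hs3 : (0:ℝ) < s + 3 := by linarith
  have hs3' : s + 3 ≠ 0 := ne_of_gt hs3
  refine ⟨⟨hrs, hs1⟩, ?_⟩
  -- difference formula
  have key : ∀ u v : ℝ, u + 3 ≠ 0 → v + 3 ≠ 0 →
      b u - b v = 16*(u-v)*(3*u*v+5*u+5*v+3)/((u+3)^2*(v+3)^2) := by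
    intro u v hu hv
    rw [hb' u, hb' v]
    field_simp
    ring
  intro x hx0 hxs hxr
  have hx3 : (0:ℝ) < x + 3 := by linarith
  have hx3' : x + 3 ≠ 0 := ne_of_gt hx3
  have hxr' : x - r ≠ 0 := sub_ne_zero.2 hxr
  have hsr' : s - r ≠ 0 := sub_ne_zero.2 (ne_of_gt hrs)
  have hqx : (b x - b r)/(x - r) = 16*(3*x*r+5*x+5*r+3)/((x+3)^2*(r+3)^2) := by
    rw [key x r hx3' hr3']
    field_simp
  have hqs : (b s - s)/(s - r) = 16*(3*s*r+5*s+5*r+3)/((s+3)^2*(r+3)^2) := by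
    nth_rewrite 2 [hs]
    rw [key s r hs3' hr3']
    field_simp
  have hAx : (0:ℝ) < 16*(3*x*r+5*x+5*r+3) := by nlinarith
  have hAs : (0:ℝ) < 16*(3*s*r+5*s+5*r+3) := by nlinarith
  have hDx : (0:ℝ) < (x+3)^2*(r+3)^2 := by positivity
  have hDs : (0:ℝ) < (s+3)^2*(r+3)^2 := by positivity
  have hlhs : |b x - b r| / |x - r| = 16*(3*x*r+5*x+5*r+3)/((x+3)^2*(r+3)^2) := by
    rw [← abs_div, hqx, abs_of_pos (div_pos hAx hDx)]
  rw [hlhs, hqs]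
  rw [div_lt_div_iff₀ hDx hDs]
  have hxs1 : x * s < 1 := by nlinarith
  have hK : (0:ℝ) < 27 - 3*r - (3*r+5)*(x*s) - (5*r+3)*(x+s) := by nlinarith
  have hsx : (0:ℝ) < s - x := by linarith
  nlinarith [mul_pos (mul_pos hsx hK) hr3sq]
end

section
/- Let b(x) = ((3x+1)/(x+3))² for real x. Then for every r with 0 < r < 1, one has (1 − b(r))/(1 − r) < (1 − b(b(r)))/(1 − b(r)). -/
/-- Convexity estimate for the Blaschke product `b(x) = ((3x+1)/(x+3))²`:
for `0 < r < 1`, `(1 − b(r))/(1 − r) < (1 − b(b(r)))/(1 − b(r))`. -/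
theorem blaschke_third_convexity_ratio
    (b : ℝ → ℝ) (hb : ∀ x : ℝ, b x = ((3 * x + 1) / (x + 3)) ^ 2) :
    ∀ r : ℝ, 0 < r → r < 1 →
      (1 - b r) / (1 - r) < (1 - b (b r)) / (1 - b r) := by
  intro r hr0 hr1
  have h3 : (0:ℝ) < r + 3 := by linarith
  have hr1' : (1:ℝ) - r > 0 := by linarith
  set s := ((3 * r + 1) / (r + 3)) ^ 2 with hs
  have hbr : b r = s := hb r
  have hs1 : s < 1 := by
    rw [hs, div_pow, div_lt_one (by positivity)]
    nlinarith
  have hsr : r < s := by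
    rw [hs, div_pow, lt_div_iff₀ (by positivity)]
    nlinarith [pow_pos (show (0:ℝ) < 1 - r by linarith) 3]
  have hs0 : 0 < s := lt_trans hr0 hsr
  have hs3 : (0:ℝ) < s + 3 := by linarith
  have hs1' : (1:ℝ) - s > 0 := by linarith
  have e1 : (1 - b r) / (1 - r) = 8 * (1 + r) / (r + 3) ^ 2 := by
    rw [hbr, hs]
    field_simp
    ring
  have e2 : (1 - b (b r)) / (1 - b r) = 8 * (1 + s) / (s + 3) ^ 2 := by
    rw [hbr, hb s]
    field_simp
    ring
  rw [e1, e2, div_lt_div_iff₀ (by positivity) (by positivity)]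
  nlinarith [mul_pos (sub_pos.mpr hsr) (show (0:ℝ) < 3 - r - s - r * s by nlinarith)]
end

section
/- Let s ∈ (0,1), let λ = 2s/(1 + s²), and define b : [0,1) → ℝ by b(x) = μ̃(μ(x)²), where μ(x) = (x + s)/(1 + sx) and μ̃(x) = (x − s²)/(1 − s²x). Then for all x with 0 < x < 1: b(x) = x·(x + λ)/(1 + λx), and λ·x ≤ b(x) ≤ x. -/
/-- For the Blaschke product `b(x) = μ̃(μ(x)²)` with `μ(x) = (x+s)/(1+sx)`,
`μ̃(x) = (x−s²)/(1−s²x)` and `λ = 2s/(1+s²)`, one has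
`b(x) = x(x+λ)/(1+λx)` and `λx ≤ b(x) ≤ x` for `0 < x < 1`. -/
theorem blaschke_semi_formula_and_bounds
    (s : ℝ) (hs : s ∈ Set.Ioo (0 : ℝ) 1)
    (lam : ℝ) (hlam : lam = 2 * s / (1 + s ^ 2))
    (μ μt b : ℝ → ℝ)
    (hμ : ∀ x : ℝ, μ x = (x + s) / (1 + s * x))
    (hμt : ∀ x : ℝ, μt x = (x - s ^ 2) / (1 - s ^ 2 * x))
    (hb : ∀ x : ℝ, b x = μt ((μ x) ^ 2)) :
    ∀ x : ℝ, 0 < x → x < 1 →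
      b x = x * (x + lam) / (1 + lam * x) ∧ lam * x ≤ b x ∧ b x ≤ x := by
  obtain ⟨hs0, hs1⟩ := hs
  intro x hx0 hx1
  have hs2 : (0:ℝ) < 1 + s ^ 2 := by positivity
  have hlam0 : 0 < lam := by rw [hlam]; positivity
  have hlam1 : lam < 1 := by
    rw [hlam, div_lt_one hs2]; nlinarith
  have hden : (0:ℝ) < 1 + lam * x := by nlinarith
  have hd1 : (0:ℝ) < 1 + s * x := by nlinarith
  have hd2 : (0:ℝ) < 1 - s ^ 2 * ((x + s) / (1 + s * x)) ^ 2 := by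
    have h : s ^ 2 * (x + s) ^ 2 < (1 + s * x) ^ 2 := by
      nlinarith [mul_pos (show (0:ℝ) < 1 - s ^ 2 by nlinarith)
        (show (0:ℝ) < 1 + s ^ 2 + 2 * s * x by positivity)]
    rw [div_pow, sub_pos, mul_div_assoc', div_lt_one (by positivity)]
    linarith
  have hform : b x = x * (x + lam) / (1 + lam * x) := by
    rw [hb, hμt, hμ, hlam]
    rw [div_eq_div_iff hd2.ne' (by positivity)]
    field_simp
    ring
  refine ⟨hform, ?_, ?_⟩
  · rw [hform, le_div_iff₀ hden]
    nlinarith [mul_nonneg (sq_nonneg x) (show (0:ℝ) ≤ 1 - lam ^ 2 by nlinarith)]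
  · rw [hform, div_le_iff₀ hden]
    nlinarith [mul_pos (mul_pos hx0 (by linarith : (0:ℝ) < 1 - x)) (by linarith : (0:ℝ) < 1 - lam)]
end

section
/- Let s ∈ (0,1), let λ = 2s/(1 + s²), and define b : [0,1) → ℝ by b(x) = μ̃(μ(x)²), where μ(x) = (x + s)/(1 + sx) and μ̃(x) = (x − s²)/(1 − s²x). Then for all x, y with 0 ≤ x < y < 1: b(y) − b(x) = (y − x)·(y + x + λ(1 + xy)) / ((1 + λy)(1 + λx)), and consequently λ·(y − x) ≤ b(y) − b(x) ≤ (2/(1 + λ))·(y − x). -/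
/-!
Writing `λ = 2s/(1+s²)`, both `μ(x)² − s²` and `1 − s²μ(x)²` factor as differences of squares,
and their quotient collapses to `b(x) = x(x+λ)/(1+λx)`. The difference `b(y) − b(x)` is then
`(y−x)` times the slope `(x+y+λ(1+xy))/((1+λx)(1+λy))`, and on `[0,1]²` this slope lies in
`[λ, 2/(1+λ)]`: after clearing denominators the two gaps are
`(1−λ²)(x+y+λxy)` and `(1−λ)((1−x)+(1−y)+λ(1−xy))`.
-/

noncomputable section

namespace Blaschke

def semiBlaschke (lam x : ℝ) : ℝ := x * (x + lam) / (1 + lam * x)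

theorem two_mul_div_one_add_sq_lt_one {s : ℝ} (hs : s ≠ 1) : 2 * s / (1 + s ^ 2) < 1 := by
  rw [div_lt_one (by positivity)]
  nlinarith [sq_pos_of_ne_zero (sub_ne_zero.mpr hs)]

theorem moebius_sq_moebius_eq_semiBlaschke {s x : ℝ} (hs : s ^ 2 ≠ 1) (hx : 1 + s * x ≠ 0)
    (hx' : 1 + s ^ 2 + 2 * s * x ≠ 0) :
    (((x + s) / (1 + s * x)) ^ 2 - s ^ 2) / (1 - s ^ 2 * ((x + s) / (1 + s * x)) ^ 2)
      = semiBlaschke (2 * s / (1 + s ^ 2)) x := by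
  have hnum : ((x + s) / (1 + s * x)) ^ 2 - s ^ 2
      = x * (1 - s ^ 2) * ((1 + s ^ 2) * x + 2 * s) / (1 + s * x) ^ 2 := by
    rw [div_pow, div_sub' (pow_ne_zero 2 hx)]; ring
  have hden : 1 - s ^ 2 * ((x + s) / (1 + s * x)) ^ 2
      = (1 - s ^ 2) * (1 + s ^ 2 + 2 * s * x) / (1 + s * x) ^ 2 := by
    rw [div_pow, mul_div_assoc', sub_div' (pow_ne_zero 2 hx)]; ring
  have h1s : (1 : ℝ) + s ^ 2 ≠ 0 := by positivity
  have hx'' : 1 + 2 * s / (1 + s ^ 2) * x ≠ 0 := by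
    rw [div_mul_eq_mul_div, one_add_div h1s]; exact div_ne_zero hx' h1s
  rw [hnum, hden, div_div_div_cancel_right₀ (pow_ne_zero 2 hx), semiBlaschke,
    div_eq_div_iff (mul_ne_zero (sub_ne_zero.mpr hs.symm) hx') hx'']
  field_simp

theorem semiBlaschke_sub {lam x y : ℝ} (hx : 1 + lam * x ≠ 0) (hy : 1 + lam * y ≠ 0) :
    semiBlaschke lam y - semiBlaschke lam x
      = (y - x) * (y + x + lam * (1 + x * y)) / ((1 + lam * y) * (1 + lam * x)) := by
  rw [semiBlaschke, semiBlaschke, div_sub_div _ _ hy hx]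
  ring

theorem le_semiBlaschke_slope {lam x y : ℝ} (hlam₀ : 0 ≤ lam) (hlam₁ : lam ≤ 1) (hx : 0 ≤ x)
    (hy : 0 ≤ y) :
    lam ≤ (y + x + lam * (1 + x * y)) / ((1 + lam * y) * (1 + lam * x)) := by
  rw [le_div_iff₀ (by positivity)]
  nlinarith [mul_nonneg (mul_nonneg (by linarith : 0 ≤ 1 - lam) (by linarith : 0 ≤ 1 + lam))
    (by positivity : 0 ≤ x + y + lam * x * y)]

theorem semiBlaschke_slope_le {lam x y : ℝ} (hlam₀ : 0 ≤ lam) (hlam₁ : lam ≤ 1) (hx : 0 ≤ x)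
    (hy : 0 ≤ y) (hx₁ : x ≤ 1) (hy₁ : y ≤ 1) :
    (y + x + lam * (1 + x * y)) / ((1 + lam * y) * (1 + lam * x)) ≤ 2 / (1 + lam) := by
  rw [div_le_div_iff₀ (by positivity) (by positivity)]
  have hxy : 0 ≤ 1 - x * y := by nlinarith
  nlinarith [mul_nonneg (by linarith : 0 ≤ 1 - lam)
    (by nlinarith : 0 ≤ (1 - x) + (1 - y) + lam * (1 - x * y))]

end Blaschke

end

open Blaschke in
/-- For the Blaschke product `b(x) = μ̃(μ(x)²)` with `μ(x) = (x+s)/(1+sx)`,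
`μ̃(x) = (x−s²)/(1−s²x)` and `λ = 2s/(1+s²)`: for `0 ≤ x < y < 1`,
`b(y) − b(x) = (y−x)(y+x+λ(1+xy))/((1+λy)(1+λx))`, and hence
`λ(y−x) ≤ b(y) − b(x) ≤ (2/(1+λ))(y−x)`. -/
theorem blaschke_semi_difference_bounds
    (s : ℝ) (hs : s ∈ Set.Ioo (0 : ℝ) 1)
    (lam : ℝ) (hlam : lam = 2 * s / (1 + s ^ 2))
    (μ μt b : ℝ → ℝ)
    (hμ : ∀ x : ℝ, μ x = (x + s) / (1 + s * x))
    (hμt : ∀ x : ℝ, μt x = (x - s ^ 2) / (1 - s ^ 2 * x))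
    (hb : ∀ x : ℝ, b x = μt ((μ x) ^ 2)) :
    ∀ x y : ℝ, 0 ≤ x → x < y → y < 1 →
      b y - b x = (y - x) * (y + x + lam * (1 + x * y)) / ((1 + lam * y) * (1 + lam * x)) ∧
      lam * (y - x) ≤ b y - b x ∧ b y - b x ≤ (2 / (1 + lam)) * (y - x) := by
  obtain ⟨hs₀, hs₁⟩ := hs
  have hlam₀ : 0 ≤ lam := hlam ▸ by positivity
  have hlam₁ : lam ≤ 1 := hlam ▸ (two_mul_div_one_add_sq_lt_one hs₁.ne).le
  have hb_eq : ∀ x, 0 ≤ x → b x = semiBlaschke lam x := fun x hx => by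
    rw [hb, hμt, hμ, hlam, moebius_sq_moebius_eq_semiBlaschke (by nlinarith : s ^ 2 < 1).ne
      (by positivity) (by positivity)]
  intro x y hx hxy hy₁
  have hy : 0 ≤ y := hx.trans hxy.le
  have hdiff := semiBlaschke_sub (lam := lam) (x := x) (y := y) (by positivity) (by positivity)
  rw [← hb_eq x hx, ← hb_eq y hy, mul_div_assoc] at hdiff
  have hyx : 0 ≤ y - x := sub_nonneg.mpr hxy.le
  refine ⟨mul_div_assoc (y - x) _ _ ▸ hdiff, ?_, ?_⟩
  · rw [hdiff, mul_comm lam]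
    exact mul_le_mul_of_nonneg_left (le_semiBlaschke_slope hlam₀ hlam₁ hx hy) hyx
  · rw [hdiff, mul_comm _ (y - x)]
    exact mul_le_mul_of_nonneg_left
      (semiBlaschke_slope_le hlam₀ hlam₁ hx hy (by linarith) hy₁.le) hyx
end

section
/- Let b(x) = ((3x+1)/(x+3))² for real x, and let x_n = bⁿ(0) denote the n-th iterate of b at 0. Then there exist positive constants c and d such that n^{1/2}·(1 − x_n) → c and n^{3/2}·(x_{n+1} − x_n) → d as n → ∞. -/
open Filter Topology Set

/-!
In the coordinate `t = 1 - x` the map becomes `q t = 8t(2 - t)/(4 - t)²`, with the parabolic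
point at `0` and `q t = t - t³/16 + O(t⁴)`. The orbit `yₙ = qⁿ(1)` decreases to the only fixed
point `0`, and `1/yₙ₊₁² - 1/yₙ² → 1/8`, so by Cesàro `1/yₙ² ~ n/8`, i.e. `√n yₙ → √8`.
Then `n^{3/2}(xₙ₊₁ - xₙ) = (√n yₙ)³/(4 - yₙ)² → √8³/16`.
-/

theorem Filter.Tendsto.div_natCast_of_tendsto_sub {u : ℕ → ℝ} {a : ℝ}
    (h : Tendsto (fun n => u (n + 1) - u n) atTop (𝓝 a)) :
    Tendsto (fun n : ℕ => u n / n) atTop (𝓝 a) := by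
  have hinit : Tendsto (fun n : ℕ => u 0 / n) atTop (𝓝 0) :=
    tendsto_const_nhds.div_atTop tendsto_natCast_atTop_atTop
  refine (zero_add a ▸ hinit.add h.cesaro).congr fun n => ?_
  rw [Finset.sum_range_sub (fun n => u n)]
  ring

theorem tendsto_sqrt_mul_of_tendsto_inv_sq_sub {y : ℕ → ℝ} {a : ℝ} (hy : ∀ n, 0 < y n)
    (ha : 0 < a) (h : Tendsto (fun n => (y (n + 1) ^ 2)⁻¹ - (y n ^ 2)⁻¹) atTop (𝓝 a)) :
    Tendsto (fun n : ℕ => √n * y n) atTop (𝓝 √a⁻¹) := by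
  have hquot : Tendsto (fun n : ℕ => (n : ℝ) * y n ^ 2) atTop (𝓝 a⁻¹) :=
    (h.div_natCast_of_tendsto_sub.inv₀ ha.ne').congr fun n => by rw [inv_div, div_inv_eq_mul]
  refine ((Real.continuous_sqrt.tendsto _).comp hquot).congr fun n => ?_
  simp only [Function.comp_apply, Real.sqrt_mul (Nat.cast_nonneg n), Real.sqrt_sq (hy n).le]

/-- `t ↦ 1 - b (1 - t)`, the map `b` in the coordinate centred at its parabolic point. -/
noncomputable def blaschkeConj (t : ℝ) : ℝ := 8 * t * (2 - t) / (4 - t) ^ 2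

theorem one_sub_blaschke_eq {x : ℝ} (hx : x ≠ -3) :
    1 - ((3 * x + 1) / (x + 3)) ^ 2 = blaschkeConj (1 - x) := by
  have hx' : x + 3 ≠ 0 := fun h => hx (by linarith)
  rw [blaschkeConj, show (4 : ℝ) - (1 - x) = x + 3 by ring]
  field_simp
  ring

theorem sub_blaschkeConj {t : ℝ} (ht : t ≠ 4) : t - blaschkeConj t = t ^ 3 / (4 - t) ^ 2 := by
  have ht' : 4 - t ≠ 0 := sub_ne_zero.mpr ht.symm
  rw [blaschkeConj]
  field_simp
  ring

theorem inv_sq_blaschkeConj_sub {t : ℝ} (ht : t ∈ Ioc (0 : ℝ) 1) :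
    (blaschkeConj t ^ 2)⁻¹ - (t ^ 2)⁻¹ = (32 - 16 * t + t ^ 2) / (64 * (2 - t) ^ 2) := by
  obtain ⟨h0, h1⟩ := ht
  have h2 : 2 - t ≠ 0 := by linarith
  have h4 : 4 - t ≠ 0 := by linarith
  rw [blaschkeConj]
  field_simp
  ring

theorem mapsTo_blaschkeConj : MapsTo blaschkeConj (Ioc 0 1) (Ioc 0 1) := by
  rintro t ⟨h0, h1⟩
  have hden : 0 < (4 - t) ^ 2 := by nlinarith
  exact ⟨div_pos (by nlinarith) hden, (div_le_one hden).mpr (by nlinarith)⟩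

theorem blaschkeConj_iterate_mem (n : ℕ) : blaschkeConj^[n] 1 ∈ Ioc 0 1 :=
  mapsTo_blaschkeConj.iterate n ⟨one_pos, le_rfl⟩

theorem continuousAt_blaschkeConj {t : ℝ} (ht : t ≠ 4) : ContinuousAt blaschkeConj t :=
  ContinuousAt.div (by fun_prop) (by fun_prop) (pow_ne_zero 2 (sub_ne_zero.mpr ht.symm))

theorem eq_zero_of_blaschkeConj_eq_self {t : ℝ} (ht : t ≠ 4) (h : blaschkeConj t = t) : t = 0 := by
  have h3 : t ^ 3 / (4 - t) ^ 2 = 0 := by rw [← sub_blaschkeConj ht, h, sub_self]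
  rw [div_eq_zero_iff, or_iff_left (pow_ne_zero 2 (sub_ne_zero.mpr ht.symm))] at h3
  exact pow_eq_zero_iff three_ne_zero |>.mp h3

theorem blaschkeConj_le {t : ℝ} (ht : t ∈ Ioc (0 : ℝ) 1) : blaschkeConj t ≤ t := by
  have h := sub_blaschkeConj (t := t) (by linarith [ht.2])
  have : 0 ≤ t ^ 3 / (4 - t) ^ 2 := by have := ht.1; positivity
  linarith

theorem tendsto_blaschkeConj_iterate :
    Tendsto (fun n => blaschkeConj^[n] 1) atTop (𝓝 0) := by
  set y := fun n => blaschkeConj^[n] 1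
  have hanti : Antitone y := antitone_nat_of_succ_le fun n => by
    simpa only [y, Function.iterate_succ_apply'] using blaschkeConj_le (blaschkeConj_iterate_mem n)
  have hbdd : BddBelow (range y) :=
    ⟨0, forall_mem_range.mpr fun n => (blaschkeConj_iterate_mem n).1.le⟩
  have hlim := tendsto_atTop_ciInf hanti hbdd
  have hL : ⨅ n, y n ≤ 1 := isClosed_Iic.mem_of_tendsto hlim
    (Eventually.of_forall fun n => (blaschkeConj_iterate_mem n).2)
  have hL4 : ⨅ n, y n ≠ 4 := by linarith
  have hfix := isFixedPt_of_tendsto_iterate hlim (continuousAt_blaschkeConj hL4)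
  rwa [eq_zero_of_blaschkeConj_eq_self hL4 hfix] at hlim

theorem tendsto_sqrt_mul_blaschkeConj_iterate :
    Tendsto (fun n : ℕ => √n * blaschkeConj^[n] 1) atTop (𝓝 √8) := by
  have hg : Tendsto (fun t : ℝ => (32 - 16 * t + t ^ 2) / (64 * (2 - t) ^ 2)) (𝓝 0)
      (𝓝 (1 / 8)) := by
    have hcont : ContinuousAt (fun t : ℝ => (32 - 16 * t + t ^ 2) / (64 * (2 - t) ^ 2)) 0 :=
      ContinuousAt.div (by fun_prop) (by fun_prop) (by norm_num)
    convert hcont.tendsto using 2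
    norm_num
  have hdiff : Tendsto (fun n => (blaschkeConj^[n + 1] 1 ^ 2)⁻¹ - (blaschkeConj^[n] 1 ^ 2)⁻¹)
      atTop (𝓝 (1 / 8)) :=
    (hg.comp tendsto_blaschkeConj_iterate).congr fun n => by
      rw [Function.iterate_succ_apply', inv_sq_blaschkeConj_sub (blaschkeConj_iterate_mem n)]
      rfl
  simpa using tendsto_sqrt_mul_of_tendsto_inv_sq_sub (fun n => (blaschkeConj_iterate_mem n).1)
    (by norm_num) hdiff

theorem one_sub_iterate_eq_blaschkeConj_iterate (b : ℝ → ℝ)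
    (hb : ∀ x : ℝ, b x = ((3 * x + 1) / (x + 3)) ^ 2) (n : ℕ) :
    1 - b^[n] 0 = blaschkeConj^[n] 1 := by
  induction n with
  | zero => simp
  | succ n ih =>
    have hne : b^[n] 0 ≠ -3 := fun h => by
      have := (blaschkeConj_iterate_mem n).2
      rw [← ih, h] at this
      norm_num at this
    rw [Function.iterate_succ_apply', Function.iterate_succ_apply', hb, one_sub_blaschke_eq hne, ih]

/-- Parabolic orbit asymptotics for `b(x) = ((3x+1)/(x+3))²`: with `x_n = bⁿ(0)`,
there are constants `c, d > 0` with `√n (1 − x_n) → c` and `n^{3/2}(x_{n+1} − x_n) → d`. -/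
theorem blaschke_third_parabolic_asymptotics
    (b : ℝ → ℝ) (hb : ∀ x : ℝ, b x = ((3 * x + 1) / (x + 3)) ^ 2) :
    ∃ c d : ℝ, 0 < c ∧ 0 < d ∧
      Tendsto (fun n : ℕ => (n : ℝ) ^ ((1 : ℝ)/2) * (1 - b^[n] 0)) atTop (nhds c) ∧
      Tendsto (fun n : ℕ => (n : ℝ) ^ ((3 : ℝ)/2) * (b^[n+1] 0 - b^[n] 0)) atTop (nhds d) := by
  set y := fun n => blaschkeConj^[n] 1
  have hy : ∀ n, 1 - b^[n] 0 = y n := one_sub_iterate_eq_blaschkeConj_iterate b hb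
  have hc : Tendsto (fun n : ℕ => √n * y n) atTop (𝓝 √8) := tendsto_sqrt_mul_blaschkeConj_iterate
  have hden : Tendsto (fun n => (4 - y n) ^ 2) atTop (𝓝 16) := by
    convert (tendsto_const_nhds (x := (4 : ℝ)).sub tendsto_blaschkeConj_iterate).pow 2
    norm_num
  refine ⟨√8, √8 ^ 3 / 16, by positivity, by positivity, ?_, ?_⟩
  · refine hc.congr fun n => ?_
    rw [hy, Real.sqrt_eq_rpow]
  · refine ((hc.pow 3).div hden (by norm_num)).congr fun n => ?_
    have hstep : b^[n+1] 0 - b^[n] 0 = y n - y (n + 1) := by linarith [hy n, hy (n + 1)]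
    have h4 : y n ≠ 4 := by linarith [(blaschkeConj_iterate_mem n).2]
    have hpow : √(n : ℝ) ^ 3 = (n : ℝ) ^ ((3 : ℝ) / 2) := by
      rw [Real.sqrt_eq_rpow, ← Real.rpow_natCast, ← Real.rpow_mul (Nat.cast_nonneg n)]
      norm_num
    rw [hstep, show y (n + 1) = blaschkeConj (y n) from Function.iterate_succ_apply' ..,
      sub_blaschkeConj h4, ← hpow, Pi.div_apply, mul_pow]
    ring
end
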